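/- arXiv:math/0009003 — 5 statements merged into one kernel-verified Lean document; each statement's English description precedes it below -/
import Mathlib

section
/- Let K be a field of characteristic 2 and G the generalized quaternion group of order 2^{m+1} with m >= 3, presented as G = <a,b | a^{2^m}=1, b^2 = a^{2^{m-1}}, a^b = a^{-1}>. If c is an element of <a> of order 8, then x = 1 + (1+c^2)(c+b) and y = 1 + (1+c^2)(c+cb) are involutions in the unit group of KG that do not commute. -/
open MonoidAlgebra

/-- The augmentation map of a group algebra. -/
noncomputable def aug (K G : Type*) [CommSemiring K] [Monoid G] :
    MonoidAlgebra K G →ₐ[K] K := MonoidAlgebra.lift K K G 1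

lemma ringlem {R : Type*} [Ring R] (C B : R)
    (h8 : C^8 = 1) (hbc : B*C = C^7*B) (hb2 : B*B = C^4)
    (h2 : ∀ r : R, r + r = 0) :
    (1 + (1+C^2)*(C+B))^2 = 1 ∧ (1 + (1+C^2)*(C+C*B))^2 = 1 ∧
    (1 + (1+C^2)*(C+B)) * (1 + (1+C^2)*(C+C*B)) + (1 + (1+C^2)*(C+C*B)) * (1 + (1+C^2)*(C+B))
      = C + C^3 + C^5 + C^7 := by
  have h2n : ∀ r : R, (2:ℕ) • r = 0 := fun r => by rw [two_nsmul]; exact h2 r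
  have h2z : ∀ r : R, (2:ℤ) • r = 0 := fun r => by rw [two_zsmul]; exact h2 r
  have h3z : ∀ r : R, (3:ℤ) • r = r := fun r => by
    rw [show (3:ℤ) = 2+1 by norm_num, add_zsmul, h2z, one_zsmul, zero_add]
  have h4z : ∀ r : R, (4:ℤ) • r = 0 := fun r => by
    rw [show (4:ℤ) = 2+2 by norm_num, add_zsmul, h2z, zero_add]
  have h5z : ∀ r : R, (5:ℤ) • r = r := fun r => by
    rw [show (5:ℤ) = 2+3 by norm_num, add_zsmul, h2z, h3z, zero_add]
  have h7z : ∀ r : R, (7:ℤ) • r = r := fun r => by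
    rw [show (7:ℤ) = 4+3 by norm_num, add_zsmul, h4z, h3z, zero_add]
  have h3n : ∀ r : R, (3:ℕ) • r = r := fun r => by
    rw [show (3:ℕ) = 2+1 by norm_num, add_nsmul, h2n, one_nsmul, zero_add]
  have h4n : ∀ r : R, (4:ℕ) • r = 0 := fun r => by
    rw [show (4:ℕ) = 2+2 by norm_num, add_nsmul, h2n, zero_add]
  have h5n : ∀ r : R, (5:ℕ) • r = r := fun r => by
    rw [show (5:ℕ) = 2+3 by norm_num, add_nsmul, h2n, h3n, zero_add]
  have h7n : ∀ r : R, (7:ℕ) • r = r := fun r => by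
    rw [show (7:ℕ) = 4+3 by norm_num, add_nsmul, h4n, h3n, zero_add]
  have bc1 : ∀ t : R, B*(C*t) = C*(C*(C*(C*(C*(C*(C*(B*t))))))) := by
    intro t; rw [← mul_assoc, hbc]; noncomm_ring
  have bc0 : B*C = C*(C*(C*(C*(C*(C*(C*B)))))) := by rw [hbc]; noncomm_ring
  have bb1 : ∀ t : R, B*(B*t) = C*(C*(C*(C*t))) := by
    intro t; rw [← mul_assoc, hb2]; noncomm_ring
  have bb0 : B*B = C*(C*(C*C)) := by rw [hb2]; noncomm_ring
  have c8_1 : ∀ t : R, C*(C*(C*(C*(C*(C*(C*(C*t))))))) = t := by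
    intro t
    have h : C*(C*(C*(C*(C*(C*(C*(C*t))))))) = C^8 * t := by noncomm_ring
    rw [h, h8, one_mul]
  have c8_0 : C*(C*(C*(C*(C*(C*(C*C)))))) = 1 := by
    have h : C*(C*(C*(C*(C*(C*(C*C)))))) = C^8 := by noncomm_ring
    rw [h, h8]
  refine ⟨?_, ?_, ?_⟩ <;>
    simp only [pow_succ, pow_zero, one_mul, mul_one, mul_add, add_mul, mul_assoc,
      bc1, bc0, bb1, bb0, c8_1, c8_0] <;>
    abel_nf <;>
    simp only [h2n, h2z, h3n, h3z, h4n, h4z, h5n, h5z, h7n, h7z, add_zero, zero_add]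

/-- Let `K` be a field of characteristic 2 and `G` the generalized quaternion group of order
`2^(m+1)`, `m ≥ 3`, with `G = ⟨a,b | a^(2^m)=1, b² = a^(2^(m-1)), aᵇ = a⁻¹⟩`.  If `c ∈ ⟨a⟩`
has order 8, then `x = 1 + (1+c²)(c+b)` and `y = 1 + (1+c²)(c+cb)` are noncommuting
involutions in the unit group of `KG`. -/
theorem stmt1 (K G : Type*) [Field K] [Group G] (hK : ringChar K = 2)
    (m : ℕ) (hm : 3 ≤ m) (a b c : G)
    (ha : orderOf a = 2 ^ m) (hb2 : b ^ 2 = a ^ 2 ^ (m - 1))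
    (hab : b⁻¹ * a * b = a⁻¹)
    (hgen : Subgroup.closure {a, b} = ⊤)
    (hc : c ∈ Subgroup.zpowers a) (hoc : orderOf c = 8) :
    (1 + (1 + of K G (c ^ 2)) * (of K G c + of K G b)) ^ 2 = 1 ∧
    (1 + (1 + of K G (c ^ 2)) * (of K G c + of K G (c * b))) ^ 2 = 1 ∧
    (1 + (1 + of K G (c ^ 2)) * (of K G c + of K G b)) *
        (1 + (1 + of K G (c ^ 2)) * (of K G c + of K G (c * b))) ≠
      (1 + (1 + of K G (c ^ 2)) * (of K G c + of K G (c * b))) *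
        (1 + (1 + of K G (c ^ 2)) * (of K G c + of K G b)) := by
  -- characteristic 2 facts
  have h20 : (2:K) = 0 := by
    have h := ringChar.Nat.cast_ringChar (R := K)
    rw [hK] at h; exact_mod_cast h
  have h2 : ∀ r : MonoidAlgebra K G, r + r = 0 := fun r => by
    rw [← two_smul K r, h20, zero_smul]
  -- group facts
  obtain ⟨k, hk⟩ := hc
  have hc8 : c ^ 8 = 1 := by rw [← hoc]; exact pow_orderOf_eq_one c
  have hcinv : c⁻¹ = c ^ 7 := by
    symm
    apply eq_inv_of_mul_eq_one_left
    rw [← pow_succ]; exact hc8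
  have hk' : a ^ k = c := hk
  have hconj : b⁻¹ * c * b = c⁻¹ := by
    have h1 : (b⁻¹ * a * b⁻¹⁻¹) ^ k = b⁻¹ * a ^ k * b⁻¹⁻¹ := conj_zpow
    rw [inv_inv, hab] at h1
    rw [← hk', ← h1, inv_zpow]
  have hconj' : b⁻¹ * c⁻¹ * b = c := by
    calc b⁻¹ * c⁻¹ * b = (b⁻¹ * c * b)⁻¹ := by group
      _ = (c⁻¹)⁻¹ := by rw [hconj]
      _ = c := inv_inv c
  have hbcg : b * c = c⁻¹ * b := by
    conv_lhs => rw [← hconj']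
    group
  -- b^2 = c^4
  have hm1 : m - 1 + 1 = m := by omega
  have ham : a ^ 2 ^ m = 1 := by rw [← ha]; exact pow_orderOf_eq_one a
  have h2m : 2 ^ (m-1) + 2 ^ (m-1) = 2 ^ m := by
    rw [← two_mul, ← pow_succ', hm1]
  have hs2 : (a ^ 2 ^ (m-1)) * (a ^ 2 ^ (m-1)) = 1 := by
    rw [← pow_add, h2m]; exact ham
  have hc41 : c ^ 4 ≠ 1 := by
    intro h
    have := orderOf_dvd_of_pow_eq_one h
    rw [hoc] at this
    omega
  have hbb : b * b = c ^ 4 := by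
    have h8k : a ^ (8 * k) = 1 := by
      have h : (c ^ (8:ℕ) : G) = a ^ (8 * k) := by
        rw [← hk', ← zpow_natCast (a ^ k) 8, ← zpow_mul]
        congr 1
        push_cast
        ring
      rw [← h, hc8]
    have hdvd : ((2:ℤ) ^ m) ∣ 8 * k := by
      have := orderOf_dvd_iff_zpow_eq_one.mpr h8k
      rw [ha] at this
      exact_mod_cast this
    have hdvd2 : ((2:ℤ) ^ (m-1)) ∣ 4 * k := by
      have h1 : (2:ℤ) * 2 ^ (m-1) ∣ 2 * (4 * k) := by
        rw [show (2:ℤ) * (4*k) = 8*k by ring, show (2:ℤ) * 2^(m-1) = 2^(m-1+1) by ring,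
          hm1]
        exact hdvd
      exact (mul_dvd_mul_iff_left (by norm_num : (2:ℤ) ≠ 0)).mp h1
    obtain ⟨q, hq⟩ := hdvd2
    have hc4 : c ^ 4 = (a ^ 2 ^ (m-1)) ^ q := by
      rw [← hk', ← zpow_natCast (a ^ k) 4, ← zpow_mul, ← zpow_natCast a (2 ^ (m-1)),
        ← zpow_mul]
      congr 1
      push_cast
      linarith [hq]
    rcases Int.even_or_odd q with ⟨r, hr⟩ | ⟨r, hr⟩
    · exfalso
      apply hc41
      rw [hc4, hr, show r + r = 2 * r by ring, zpow_mul]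
      have : (a ^ 2 ^ (m-1) : G) ^ (2:ℤ) = 1 := by
        rw [zpow_two]; exact hs2
      rw [this, one_zpow]
    · rw [← pow_two, hb2, hc4, hr, zpow_add, zpow_mul, zpow_one]
      have : (a ^ 2 ^ (m-1) : G) ^ (2:ℤ) = 1 := by rw [zpow_two]; exact hs2
      rw [this, one_zpow, one_mul]
  -- algebra facts
  set C : MonoidAlgebra K G := of K G c with hC
  set B : MonoidAlgebra K G := of K G b with hB
  have hC8 : C ^ 8 = 1 := by rw [hC, ← map_pow, hc8, map_one]
  have hBC : B * C = C ^ 7 * B := by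
    rw [hC, hB, ← map_mul, hbcg, hcinv, map_mul, map_pow]
  have hBB : B * B = C ^ 4 := by rw [hB, hC, ← map_mul, hbb, map_pow]
  obtain ⟨H1, H2, H3⟩ := ringlem C B hC8 hBC hBB h2
  have e1 : of K G (c ^ 2) = C ^ 2 := by rw [hC, map_pow]
  have e2 : of K G (c * b) = C * B := by rw [hC, hB, map_mul]
  rw [e1, e2]
  refine ⟨H1, H2, ?_⟩
  intro heq
  have hzero : C + C^3 + C^5 + C^7 = 0 := by
    rw [← H3, heq]; exact h2 _
  -- derive contradiction: coefficients
  have hpow : ∀ n : ℕ, C ^ n = MonoidAlgebra.single (c ^ n) 1 := by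
    intro n
    rw [hC, ← map_pow, of_apply]
  have hone : C = MonoidAlgebra.single c 1 := by rw [hC, of_apply]
  rw [hpow 3, hpow 5, hpow 7, hone] at hzero
  have hne : ∀ n : ℕ, 2 ≤ n → n < 8 → c ^ n ≠ c := by
    intro n hn2 hn8 h
    have h1 : c ^ (n-1) * c = 1 * c := by
      rw [one_mul, ← pow_succ, show n - 1 + 1 = n from by omega]
      exact h
    have hd := orderOf_dvd_of_pow_eq_one (mul_right_cancel h1)
    rw [hoc] at hd
    omega
  have h3 := hne 3 (by norm_num) (by norm_num)
  have h5 := hne 5 (by norm_num) (by norm_num)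
  have h7 := hne 7 (by norm_num) (by norm_num)
  have hzero' : (Finsupp.single c (1:K) + Finsupp.single (c^3) 1
      + Finsupp.single (c^5) 1 + Finsupp.single (c^7) 1 : G →₀ K) = 0 := congrArg MonoidAlgebra.coeff hzero
  have hcf := DFunLike.congr_fun hzero' c
  simp [Finsupp.single_apply, h3, h5, h7] at hcf
end

section
/- Let K be a field of characteristic 2, G a group, a a central element of order 2 in G, and b, g elements of G. If the involutions x = 1 + (a+1)g and b commute in KG (with b of order 2), then (a+1)(1 + [b,g]) = 0 in KG, and hence [g,b] = 1 or [g,b] = a. -/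
open MonoidAlgebra

/-- Let `K` be a field of characteristic 2, `G` a group, `a` a central element of order 2 of
`G` and `b, g ∈ G` with `b² = 1`.  If the involution `x = 1 + (a+1)g` commutes with `b` in
`KG`, then `(a+1)(1 + [b,g]) = 0` in `KG` and hence `[g,b] = 1` or `[g,b] = a`
(commutators being `[u,v] = u⁻¹v⁻¹uv`). -/
theorem stmt3 (K G : Type*) [Field K] [Group G] (hK : ringChar K = 2)
    (a b g : G) (hac : a ∈ Subgroup.center G) (ha : orderOf a = 2) (hb : b ^ 2 = 1)
    (hcomm : (1 + (of K G a + 1) * of K G g) * of K G b =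
      of K G b * (1 + (of K G a + 1) * of K G g)) :
    (of K G a + 1) * (1 + of K G (b⁻¹ * g⁻¹ * b * g)) = 0 ∧
    (g⁻¹ * b⁻¹ * g * b = 1 ∨ g⁻¹ * b⁻¹ * g * b = a) := by
  have hcen : ∀ x : G, x * a = a * x := Subgroup.mem_center_iff.mp hac
  have ha2 : a * a = 1 := by
    have h := pow_orderOf_eq_one a; rw [ha, pow_two] at h; exact h
  have haneq : a ≠ 1 := by
    intro h; rw [h, orderOf_one] at ha; omega
  have h11 : (1 : K) + 1 = 0 := by
    have h2 : ((2 : ℕ) : K) = 0 := (ringChar.spec K 2).mpr (by rw [hK])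
    rw [one_add_one_eq_two]
    simpa using h2
  have h110 : (1 : MonoidAlgebra K G) + 1 = 0 := by
    rw [← map_one (algebraMap K (MonoidAlgebra K G)), ← map_add, h11, map_zero]
  have hxx : ∀ x : MonoidAlgebra K G, x + x = 0 := by
    intro x
    rw [← two_mul, show (2 : MonoidAlgebra K G) = 0 by rw [← one_add_one_eq_two, h110],
      zero_mul]
  -- extract the combinatorial identity
  have h1 : of K G (a * g * b) + of K G (g * b)
      = of K G (b * (a * g)) + of K G (b * g) := by
    have h := hcomm
    rw [add_mul, one_mul, mul_add, mul_one, add_mul, one_mul, mul_add] at h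
    simp only [map_mul] at *
    have := add_left_cancel h
    linear_combination (norm := noncomm_ring) this
  classical
  have h1' : (Finsupp.single (a * g * b) (1:K) + Finsupp.single (g * b) 1 : G →₀ K)
      = Finsupp.single (b * (a * g)) 1 + Finsupp.single (b * g) 1 := congrArg MonoidAlgebra.coeff h1
  have h2 := Finsupp.ext_iff.mp h1' (g * b)
  simp only [Finsupp.add_apply, Finsupp.single_apply] at h2
  simp only [if_true, zero_add] at h2
  have hne1 : ¬ (a * g * b = g * b) := by
    intro h
    apply haneq
    have h' := mul_right_cancel h
    have h'' : a * g = 1 * g := by rw [h', one_mul]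
    exact mul_right_cancel h''
  rw [if_neg hne1, zero_add] at h2
  by_cases hc : b * g = g * b
  · have hA : g⁻¹ * b⁻¹ * g * b = 1 := by
      rw [mul_assoc, ← hc, ← mul_assoc, mul_assoc g⁻¹, inv_mul_cancel, mul_one,
        inv_mul_cancel]
    have hB : b⁻¹ * g⁻¹ * b * g = 1 := by
      rw [mul_assoc, hc, ← mul_assoc, mul_assoc b⁻¹, inv_mul_cancel, mul_one,
        inv_mul_cancel]
    refine ⟨?_, Or.inl hA⟩
    rw [hB, map_one, h110, mul_zero]
  · have hbag : b * (a * g) = g * b := by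
      rw [if_neg hc, add_zero] at h2
      by_contra hne
      rw [if_neg hne] at h2
      exact (one_ne_zero : (1 : K) ≠ 0) h2
    have hbg : b * g = a * (g * b) := by
      rw [← hbag, ← mul_assoc, ← hcen b, mul_assoc, ← mul_assoc a a g, ha2, one_mul]
    have hA : g⁻¹ * b⁻¹ * g * b = a := by
      rw [mul_assoc, ← hbag, ← mul_assoc, mul_assoc g⁻¹ b⁻¹ b, inv_mul_cancel, mul_one,
        ← hcen g, ← mul_assoc, inv_mul_cancel, one_mul]
    have hB : b⁻¹ * g⁻¹ * b * g = a := by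
      rw [mul_assoc, hbg, ← mul_assoc, hcen (b⁻¹ * g⁻¹), mul_assoc a,
        mul_assoc b⁻¹, inv_mul_cancel_left, inv_mul_cancel, mul_one]
    refine ⟨?_, Or.inr hA⟩
    rw [hB]
    have hexp : (of K G a + 1) * (1 + of K G a)
        = of K G a * of K G a + 1 + (of K G a + of K G a) := by noncomm_ring
    rw [hexp, ← map_mul, ha2, map_one, h110, hxx (of K G a), add_zero]
end

section
/- Let G be a group whose commutator subgroup G' has order 2, and let H be any two-generator nonabelian subgroup of G. Then G = H * C_G(H), i.e. every element of G is a product of an element of H and an element centralizing H. -/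
open scoped commutatorElement

/-- Let `G` be a group whose commutator subgroup has order 2, and let `H = ⟨a,b⟩` be a
two-generator nonabelian subgroup of `G`.  Then `G = H · C_G(H)`: every element of `G` is
a product of an element of `H` and an element centralizing `H`. -/
theorem stmt11 (G : Type*) [Group G] (hG' : Nat.card (commutator G) = 2)
    (a b : G) (hna : a * b ≠ b * a) :
    ∀ g : G, ∃ h ∈ Subgroup.closure {a, b},
      ∃ c ∈ Subgroup.centralizer (Subgroup.closure {a, b} : Set G), g = h * c := by
  -- the commutator subgroup has a unique nontrivial element
  have huniq : ∀ u v : G, u ∈ commutator G → v ∈ commutator G → u ≠ 1 → v ≠ 1 → u = v := by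
    intro u v hu hv hu1 hv1
    obtain ⟨x, y, hxy, hset⟩ := Nat.card_eq_two_iff.mp hG'
    have h1 : (1 : commutator G) ∈ ({x, y} : Set (commutator G)) := hset ▸ Set.mem_univ _
    have h2 : (⟨u, hu⟩ : commutator G) ∈ ({x, y} : Set (commutator G)) := hset ▸ Set.mem_univ _
    have h3 : (⟨v, hv⟩ : commutator G) ∈ ({x, y} : Set (commutator G)) := hset ▸ Set.mem_univ _
    simp only [Set.mem_insert_iff, Set.mem_singleton_iff] at h1 h2 h3
    have hu1' : (⟨u, hu⟩ : commutator G) ≠ 1 := fun h => hu1 (congrArg Subtype.val h)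
    have hv1' : (⟨v, hv⟩ : commutator G) ≠ 1 := fun h => hv1 (congrArg Subtype.val h)
    have : (⟨u, hu⟩ : commutator G) = (⟨v, hv⟩ : commutator G) := by
      rcases h1 with h1 | h1 <;> rcases h2 with h2 | h2 <;> rcases h3 with h3 | h3 <;>
        first
        | (exact absurd (h2.trans h1.symm) hu1')
        | (exact absurd (h3.trans h1.symm) hv1')
        | (rw [h2, h3])
    exact congrArg Subtype.val this
  have hmemK : ∀ x y : G, ⁅x, y⁆ ∈ commutator G := fun x y =>
    Subgroup.commutator_mem_commutator (Subgroup.mem_top x) (Subgroup.mem_top y)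
  set z := ⁅a, b⁆ with hzdef
  have hz1 : z ≠ 1 := by
    rw [hzdef, Ne, commutatorElement_eq_one_iff_mul_comm]
    exact hna
  have hzK : z ∈ commutator G := hmemK a b
  -- values of commutators: each is 1 or z
  have hdi : ∀ x y : G, ⁅x, y⁆ = 1 ∨ ⁅x, y⁆ = z := by
    intro x y
    by_cases h : ⁅x, y⁆ = 1
    · exact Or.inl h
    · exact Or.inr (huniq _ _ (hmemK x y) hzK h hz1)
  -- key cancellation: equal commutators against x means h⁻¹ * g commutes with x
  have cancel : ∀ x g h : G, ⁅g, x⁆ = ⁅h, x⁆ → x * (h⁻¹ * g) = (h⁻¹ * g) * x := by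
    intro x g h he
    rw [commutatorElement_def, commutatorElement_def] at he
    have he' : g * x * g⁻¹ = h * x * h⁻¹ := by
      have := mul_right_cancel he
      simpa using this
    have h2 : h⁻¹ * (g * x * g⁻¹) * h = x := by rw [he']; group
    calc x * (h⁻¹ * g) = (h⁻¹ * (g * x * g⁻¹) * h) * (h⁻¹ * g) := by rw [h2]
      _ = (h⁻¹ * g) * x := by group
  -- commutator values for the four candidates
  have hba : ⁅b, a⁆ = z := by
    refine huniq _ _ (hmemK b a) hzK ?_ hz1
    rw [Ne, commutatorElement_eq_one_iff_mul_comm]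
    intro h; exact hna h.symm
  have habb : ⁅a * b, b⁆ = z := by rw [hzdef]; group
  have haba : ⁅a * b, a⁆ = z := by
    refine huniq _ _ (hmemK (a * b) a) hzK ?_ hz1
    rw [Ne, commutatorElement_eq_one_iff_mul_comm]
    intro h
    have h' : a * (b * a) = a * (a * b) := by rw [← mul_assoc]; exact h
    exact hna (mul_left_cancel h').symm
  intro g
  have haH : a ∈ Subgroup.closure {a, b} :=
    Subgroup.subset_closure (Set.mem_insert a {b})
  have hbH : b ∈ Subgroup.closure {a, b} :=
    Subgroup.subset_closure (Set.mem_insert_of_mem a rfl)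
  -- choose h matching the commutators of g
  obtain ⟨h, hhH, hca, hcb⟩ : ∃ h ∈ Subgroup.closure {a, b}, ⁅g, a⁆ = ⁅h, a⁆ ∧ ⁅g, b⁆ = ⁅h, b⁆ := by
    rcases hdi g a with h1 | h1 <;> rcases hdi g b with h2 | h2
    · exact ⟨1, Subgroup.one_mem _, by rw [h1]; group, by rw [h2]; group⟩
    · exact ⟨a, haH, by rw [h1]; group, by rw [h2, hzdef]⟩
    · exact ⟨b, hbH, by rw [h1, hba], by rw [h2]; group⟩
    · exact ⟨a * b, Subgroup.mul_mem _ haH hbH, by rw [h1, haba], by rw [h2, habb]⟩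
  refine ⟨h, hhH, h⁻¹ * g, ?_, by group⟩
  rw [Subgroup.mem_centralizer_iff]
  intro x hx
  induction hx using Subgroup.closure_induction with
  | mem y hy =>
    rcases hy with hy | hy
    · rw [hy]; exact cancel a g h hca
    · rw [Set.mem_singleton_iff] at hy; rw [hy]; exact cancel b g h hcb
  | one => simp
  | mul p q _ _ hp hq => rw [mul_assoc, hq, ← mul_assoc, hp, mul_assoc]
  | inv p _ hp =>
    have := hp
    calc p⁻¹ * (h⁻¹ * g) = p⁻¹ * ((h⁻¹ * g) * p) * p⁻¹ := by group
      _ = p⁻¹ * (p * (h⁻¹ * g)) * p⁻¹ := by rw [this]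
      _ = (h⁻¹ * g) * p⁻¹ := by group
end

section
/- Let K be a field of characteristic 2 and G an abelian 2-group. An element x of KG satisfies x^2 = 0 if and only if x lies in the ideal I(Omega(G)) generated by all elements g - 1 with g in G of order dividing 2. Consequently, the set of involutory normalized units is Omega(V(KG)) = 1 + I(Omega(G)). -/
open MonoidAlgebra

namespace Stmt12Aux

variable {K : Type*} {G : Type*} [Field K] [CommGroup G]

/-- The subgroup `Ω(G)` of elements of order dividing 2. -/
def Om (G : Type*) [CommGroup G] : Subgroup G where
  carrier := {g | g ^ 2 = 1}
  one_mem' := one_pow 2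
  mul_mem' := by
    intro a b ha hb
    simp only [Set.mem_setOf_eq] at *
    rw [mul_pow, ha, hb, mul_one]
  inv_mem' := by
    intro a ha
    simp only [Set.mem_setOf_eq] at *
    rw [inv_pow, ha, inv_one]

lemma mem_Om_iff {g : G} : g ∈ Om G ↔ g ^ 2 = 1 := Iff.rfl

lemma Om_le_ker : Om G ≤ (powMonoidHom 2 : G →* G).ker := by
  intro g hg
  simpa [MonoidHom.mem_ker, powMonoidHom_apply, mem_Om_iff] using hg

/-- The squaring map factors through `G ⧸ Ω(G)`. -/
noncomputable def iota : G ⧸ Om G →* G :=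
  QuotientGroup.lift (Om G) (powMonoidHom 2) Om_le_ker

lemma iota_mk (g : G) : iota ((g : G ⧸ Om G)) = g ^ 2 :=
  QuotientGroup.lift_mk' _ _ g

lemma iota_injective : Function.Injective (iota (G := G)) := by
  intro a b
  induction a using QuotientGroup.induction_on with
  | H a =>
  induction b using QuotientGroup.induction_on with
  | H b =>
  intro h
  rw [iota_mk, iota_mk] at h
  refine QuotientGroup.eq.2 ?_
  rw [mem_Om_iff, mul_pow, inv_pow, h, inv_mul_cancel]

lemma sq_comp (g : G) :
    g ^ 2 = iota ((QuotientGroup.mk' (Om G)) g) := (iota_mk g).symm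

section CharTwo

variable (hK2 : CharP K 2)

lemma frob_add (hK2 : CharP K 2) (a b : K) : (a + b) ^ 2 = a ^ 2 + b ^ 2 := by
  haveI := hK2
  exact add_pow_char a b 2

/-- In characteristic 2, squaring in `K[G]` is `mapDomain` of squaring composed with
`mapRange` of the Frobenius. -/
lemma sq_eq (hK2 : CharP K 2) (x : MonoidAlgebra K G) :
    (x ^ 2).coeff = Finsupp.mapDomain (fun g : G => g ^ 2)
      (Finsupp.mapRange (fun a : K => a ^ 2) (zero_pow two_ne_zero) x.coeff) := by
  haveI := hK2
  haveI : CharP (MonoidAlgebra K G) 2 := charP_of_injective_algebraMap' K 2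
  induction x using MonoidAlgebra.induction_linear with
  | zero => simp
  | add f g hf hg =>
    rw [add_pow_char, MonoidAlgebra.coeff_add, hf, hg, MonoidAlgebra.coeff_add,
      Finsupp.mapRange_add, Finsupp.mapDomain_add]
    intro a b
    exact add_pow_char a b 2
  | single a b =>
    rw [MonoidAlgebra.single_pow a b 2, MonoidAlgebra.coeff_single, MonoidAlgebra.coeff_single,
      Finsupp.mapRange_single, Finsupp.mapDomain_single]

lemma mapRange_frob_eq_zero_iff (y : G →₀ K) :
    Finsupp.mapRange (fun a : K => a ^ 2) (zero_pow two_ne_zero) y = 0 ↔ y = 0 := by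
  constructor
  · intro h
    ext a
    have := congrArg (fun f : G →₀ K => f a) h
    simp only [Finsupp.mapRange_apply, Finsupp.coe_zero, Pi.zero_apply] at this
    exact pow_eq_zero_iff two_ne_zero |>.mp this
  · rintro rfl; simp

/-- `x² = 0` iff `x` dies in `K[G ⧸ Ω(G)]`. -/
lemma sq_zero_iff (hK2 : CharP K 2) (x : MonoidAlgebra K G) :
    x ^ 2 = 0 ↔ Finsupp.mapDomain (⇑(QuotientGroup.mk' (Om G))) x.coeff = 0 := by
  rw [← MonoidAlgebra.coeff_inj, MonoidAlgebra.coeff_zero, sq_eq hK2]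
  have hcomp : (fun g : G => g ^ 2) =
      (⇑(iota (G := G))) ∘ (⇑(QuotientGroup.mk' (Om G))) := by
    funext g
    exact sq_comp g
  haveI := hK2
  rw [hcomp, Finsupp.mapDomain_comp,
    (Finsupp.mapDomain_injective iota_injective).eq_iff' Finsupp.mapDomain_zero,
    Finsupp.mapDomain_mapRange]
  · exact mapRange_frob_eq_zero_iff _
  · intro a b
    exact add_pow_char a b 2

end CharTwo

/-- The generating set of the ideal. -/
def S (K G : Type*) [Field K] [CommGroup G] : Set (MonoidAlgebra K G) :=
  {y : MonoidAlgebra K G | ∃ g : G, g ^ 2 = 1 ∧ y = of K G g - 1}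

lemma mem_span_of_mapDomain_eq_zero (x : MonoidAlgebra K G)
    (hx : Finsupp.mapDomain (⇑(QuotientGroup.mk' (Om G))) x.coeff = 0) :
    x ∈ Ideal.span (S K G) := by
  classical
  set q : G → G ⧸ Om G := ⇑(QuotientGroup.mk' (Om G)) with hqdef
  clear_value q
  suffices H : ∀ n (x : MonoidAlgebra K G), x.coeff.support.card ≤ n →
      Finsupp.mapDomain q x.coeff = 0 → x ∈ Ideal.span (S K G) from H _ x le_rfl hx
  intro n
  induction n with
  | zero =>
    intro x hcard _
    have hsupp : x.coeff.support = ∅ := Finset.card_eq_zero.mp (Nat.le_zero.mp hcard)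
    have : x = 0 := MonoidAlgebra.coeff_injective (Finsupp.support_eq_empty.mp hsupp)
    simp [this]
  | succ n ih =>
    intro x hcard hx
    by_cases h0 : x = 0
    · simp [h0]
    obtain ⟨c, hcmem⟩ := Finsupp.support_nonempty_iff.mpr (fun h => h0 (MonoidAlgebra.coeff_injective h))
    have hex : ∃ g ∈ x.coeff.support, g ≠ c ∧ q g = q c := by
      by_contra hno
      push_neg at hno
      have happ : Finsupp.mapDomain q x.coeff (q c) = x.coeff c := by
        rw [Finsupp.mapDomain, Finsupp.sum_apply, Finsupp.sum,
          Finset.sum_eq_single c]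
        · simp [Finsupp.single_apply]
        · intro b hb hbc
          rw [Finsupp.single_apply, if_neg (hno b hb hbc)]
        · intro hcc
          exact absurd hcmem hcc
      rw [hx] at happ
      exact (Finsupp.mem_support_iff.mp hcmem) happ.symm
    obtain ⟨g, hgmem, hgc, hqg⟩ := hex
    have hwOm : g⁻¹ * c ∈ Om G := by
      have : ((g : G ⧸ Om G) : G ⧸ Om G) = (c : G ⧸ Om G) := by
        simpa [hqdef, QuotientGroup.mk'_apply] using hqg
      exact QuotientGroup.eq.mp this
    set w : G := g⁻¹ * c with hw
    have hw2 : w ^ 2 = 1 := hwOm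
    set d : K := x.coeff c with hd
    set u : MonoidAlgebra K G := MonoidAlgebra.single g d * (of K G w - 1) with hu
    have hu_span : u ∈ Ideal.span (S K G) :=
      Ideal.mul_mem_left _ _ (Ideal.subset_span ⟨w, hw2, rfl⟩)
    have hu_eq : u = MonoidAlgebra.single c d - MonoidAlgebra.single g d := by
      rw [hu, mul_sub, mul_one, MonoidAlgebra.of_apply]
      congr 1
      rw [MonoidAlgebra.single_mul_single, mul_one, hw, mul_inv_cancel_left]
    set y : MonoidAlgebra K G := x - u with hy
    have hqu : Finsupp.mapDomain q u.coeff = 0 := by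
      rw [hu_eq, MonoidAlgebra.coeff_sub, MonoidAlgebra.coeff_single, MonoidAlgebra.coeff_single]
      rw [show Finsupp.mapDomain q (Finsupp.single c d - Finsupp.single g d) =
        Finsupp.mapDomain q (Finsupp.single c d) - Finsupp.mapDomain q (Finsupp.single g d) from
        map_sub (Finsupp.mapDomain.addMonoidHom q) _ _]
      rw [Finsupp.mapDomain_single, Finsupp.mapDomain_single, hqg, sub_self]
    have hqy : Finsupp.mapDomain q y.coeff = 0 := by
      rw [hy, MonoidAlgebra.coeff_sub,
        show Finsupp.mapDomain q (x.coeff - u.coeff) = Finsupp.mapDomain q x.coeff - Finsupp.mapDomain q u.coeff from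
          map_sub (Finsupp.mapDomain.addMonoidHom q) _ _,
        hx, hqu, sub_self]
    have hyc : y.coeff c = 0 := by
      rw [hy, hu_eq]
      show x.coeff c - ((Finsupp.single c d : G →₀ K) c
        - (Finsupp.single g d : G →₀ K) c) = 0
      rw [Finsupp.single_apply, Finsupp.single_apply, if_pos rfl, if_neg hgc, hd]
      ring
    have hy_supp : y.coeff.support ⊆ x.coeff.support.erase c := by
      intro a ha
      rw [Finsupp.mem_support_iff] at ha
      rw [Finset.mem_erase]
      constructor
      · rintro rfl
        exact ha hyc
      · by_contra hax
        apply ha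
        have hxa : x.coeff a = 0 := Finsupp.notMem_support_iff.mp hax
        have hag : a ≠ g := by rintro rfl; exact hax hgmem
        have hac : a ≠ c := by rintro rfl; exact hax hcmem
        rw [hy, hu_eq]
        show x.coeff a - ((Finsupp.single c d : G →₀ K) a
          - (Finsupp.single g d : G →₀ K) a) = 0
        rw [Finsupp.single_apply, Finsupp.single_apply, if_neg (Ne.symm hac),
          if_neg (Ne.symm hag), hxa]
        ring
    have hycard : y.coeff.support.card ≤ n := by
      have h1 : y.coeff.support.card ≤ (x.coeff.support.erase c).card := Finset.card_le_card hy_supp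
      have h2 : (x.coeff.support.erase c).card = x.coeff.support.card - 1 :=
        Finset.card_erase_of_mem hcmem
      omega
    have hyspan := ih y hycard hqy
    have hxy : x = y + u := by rw [hy]; ring
    rw [hxy]
    exact Ideal.add_mem _ hyspan hu_span

lemma span_le_ker :
    Ideal.span (S K G) ≤
      RingHom.ker (MonoidAlgebra.mapDomainRingHom K (QuotientGroup.mk' (Om G))) := by
  rw [Ideal.span_le]
  rintro y ⟨g, hg, rfl⟩
  have hq1 : (QuotientGroup.mk' (Om G)) g = 1 := by
    rw [QuotientGroup.mk'_apply]
    exact (QuotientGroup.eq_one_iff g).mpr hg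
  simp only [SetLike.mem_coe, RingHom.mem_ker, map_sub, map_one]
  have h1 : (MonoidAlgebra.mapDomainRingHom K (QuotientGroup.mk' (Om G))) (of K G g)
      = MonoidAlgebra.mapDomain (⇑(QuotientGroup.mk' (Om G))) (of K G g) := rfl
  rw [h1, MonoidAlgebra.of_apply, MonoidAlgebra.mapDomain_single, hq1]
  show (1 : MonoidAlgebra K (G ⧸ Om G)) - 1 = 0
  exact sub_self 1

lemma sq_zero_iff_mem_span (hK2 : CharP K 2) (x : MonoidAlgebra K G) :
    x ^ 2 = 0 ↔ x ∈ Ideal.span (S K G) := by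
  rw [sq_zero_iff hK2]
  constructor
  · exact mem_span_of_mapDomain_eq_zero x
  · intro h
    have := span_le_ker h
    rw [RingHom.mem_ker] at this
    exact congrArg MonoidAlgebra.coeff this

lemma span_le_ker_aug :
    Ideal.span (S K G) ≤ RingHom.ker ((aug K G : MonoidAlgebra K G →ₐ[K] K) :
      MonoidAlgebra K G →+* K) := by
  rw [Ideal.span_le]
  rintro y ⟨g, hg, rfl⟩
  simp only [SetLike.mem_coe, RingHom.mem_ker]
  rw [show ((aug K G : MonoidAlgebra K G →ₐ[K] K) : MonoidAlgebra K G →+* K) (of K G g - 1)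
      = aug K G (of K G g - 1) from rfl]
  rw [map_sub, map_one, aug, MonoidAlgebra.lift_of]
  simp

end Stmt12Aux

open Stmt12Aux in
/-- Let `K` be a field of characteristic 2 and `G` an abelian 2-group.  An element `x` of
`KG` satisfies `x² = 0` if and only if `x` lies in the ideal `I(Ω(G))` generated by the
elements `g - 1` with `g ∈ G` of order dividing 2.  Consequently, the set of involutory
normalized units of `KG` is exactly `1 + I(Ω(G))`. -/
theorem stmt12 (K G : Type*) [Field K] [CommGroup G] (hK : ringChar K = 2)
    (h2 : ∀ g : G, ∃ k : ℕ, orderOf g = 2 ^ k) :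
    (∀ x : MonoidAlgebra K G, x ^ 2 = 0 ↔
      x ∈ Ideal.span {y : MonoidAlgebra K G | ∃ g : G, g ^ 2 = 1 ∧ y = of K G g - 1}) ∧
    {x : MonoidAlgebra K G | aug K G x = 1 ∧ x ^ 2 = 1} =
      {x : MonoidAlgebra K G |
        x - 1 ∈ Ideal.span {y : MonoidAlgebra K G | ∃ g : G, g ^ 2 = 1 ∧ y = of K G g - 1}} := by
  classical
  haveI hK2 : CharP K 2 := hK ▸ ringChar.charP K
  haveI : CharP (MonoidAlgebra K G) 2 := charP_of_injective_algebraMap' K 2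
  have part1 : ∀ x : MonoidAlgebra K G, x ^ 2 = 0 ↔
      x ∈ Ideal.span {y : MonoidAlgebra K G | ∃ g : G, g ^ 2 = 1 ∧ y = of K G g - 1} :=
    fun x => sq_zero_iff_mem_span hK2 x
  refine ⟨part1, ?_⟩
  ext x
  simp only [Set.mem_setOf_eq]
  constructor
  · rintro ⟨haug, hx2⟩
    rw [← part1]
    rw [sub_pow_char, hx2, one_pow, sub_self]
  · intro h
    have hsq : (x - 1) ^ 2 = 0 := (part1 _).mpr h
    rw [sub_pow_char, one_pow, sub_eq_zero] at hsq
    refine ⟨?_, hsq⟩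
    have h0 : aug K G (x - 1) = 0 := span_le_ker_aug h
    have := map_one (aug K G)
    have h1 : aug K G x - 1 = 0 := by
      rw [← this, ← map_sub]
      exact h0
    exact sub_eq_zero.mp h1
end

section
/- Let K be a field of characteristic 2 and H = <c> a cyclic group of order 2^n. If v in KH satisfies v^2 in v * KH * (1 + c^{2^{n-1}}), then v^2 = 0. -/
open MonoidAlgebra Polynomial

/-- Let `K` be a field of characteristic 2 and `H = ⟨c⟩` a cyclic group of order `2^n`.
If `v ∈ KH` satisfies `v² ∈ v·KH·(1 + c^(2^(n-1)))`, then `v² = 0`. -/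
theorem stmt14 (K H : Type*) [Field K] [Group H] (hK : ringChar K = 2)
    (n : ℕ) (hn : 1 ≤ n) (c : H)
    (hcyc : ∀ g : H, g ∈ Subgroup.zpowers c) (hc : orderOf c = 2 ^ n)
    (v : MonoidAlgebra K H)
    (hv : ∃ w : MonoidAlgebra K H, v ^ 2 = v * w * (1 + of K H (c ^ 2 ^ (n - 1)))) :
    v ^ 2 = 0 := by
  classical
  haveI : CharP K 2 := hK ▸ ringChar.charP K
  haveI : Fact (Nat.Prime 2) := ⟨Nat.prime_two⟩
  obtain ⟨w, hw⟩ := hv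
  set φ : K[X] →ₐ[K] MonoidAlgebra K H := aeval (of K H c) with hφdef
  have hφX : ∀ k : ℕ, φ (X ^ k) = of K H (c ^ k) := by
    intro k
    rw [map_pow, hφdef, aeval_X, ← map_pow (of K H)]
  -- surjectivity of φ
  have hsurj : Function.Surjective φ := by
    intro x
    induction x using MonoidAlgebra.induction_on with
    | of g =>
      obtain ⟨z, hz⟩ := hcyc g
      have hop : (0 : ℤ) < (orderOf c : ℤ) := by
        have : 0 < orderOf c := by rw [hc]; positivity
        exact_mod_cast this
      refine ⟨X ^ (z % (orderOf c : ℤ)).toNat, ?_⟩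
      rw [hφX]
      congr 1
      have h0 : (0 : ℤ) ≤ z % (orderOf c : ℤ) := Int.emod_nonneg z (ne_of_gt hop)
      calc c ^ (z % (orderOf c : ℤ)).toNat
          = c ^ ((z % (orderOf c : ℤ)).toNat : ℤ) := (zpow_natCast c _).symm
        _ = c ^ (z % (orderOf c : ℤ)) := by rw [Int.toNat_of_nonneg h0]
        _ = c ^ z := zpow_mod_orderOf c z
        _ = g := hz
    | add f g hf hg =>
      obtain ⟨F, hF⟩ := hf; obtain ⟨G, hG⟩ := hg
      exact ⟨F + G, by rw [map_add, hF, hG]⟩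
    | smul r f hf =>
      obtain ⟨F, hF⟩ := hf
      exact ⟨r • F, by rw [map_smul, hF]⟩
  -- the "kernel" lemma
  have hMφ : φ ((X : K[X]) ^ 2 ^ n - 1) = 0 := by
    rw [map_sub, map_one, hφX, ← hc, pow_orderOf_eq_one, map_one, sub_self]
  have hker : ∀ P : K[X], φ P = 0 → ((X : K[X]) ^ 2 ^ n - 1) ∣ P := by
    intro P hP
    have h2n : (2 : ℕ) ^ n ≠ 0 := by positivity
    have hM : ((X : K[X]) ^ 2 ^ n - C 1).Monic := monic_X_pow_sub_C (1 : K) h2n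
    have hC1 : ((X : K[X]) ^ 2 ^ n - C 1) = (X : K[X]) ^ 2 ^ n - 1 := by rw [C_1]
    set r := P %ₘ ((X : K[X]) ^ 2 ^ n - C 1) with hrdef
    have hsplit := modByMonic_add_div P ((X : K[X]) ^ 2 ^ n - C 1)
    have hφr : φ r = 0 := by
      have : φ r + φ (((X : K[X]) ^ 2 ^ n - C 1) * (P /ₘ ((X : K[X]) ^ 2 ^ n - C 1))) = 0 := by
        rw [← map_add, hsplit, hP]
      rwa [map_mul, hC1, hMφ, zero_mul, add_zero] at this
    have hr0 : r = 0 := by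
      by_contra hne
      have hdeg : r.degree < ((X : K[X]) ^ 2 ^ n - C 1).degree := degree_modByMonic_lt P hM
      rw [degree_X_pow_sub_C (by positivity) (1 : K)] at hdeg
      have hnatdeg : r.natDegree < 2 ^ n := by
        rwa [← natDegree_lt_iff_degree_lt hne] at hdeg
      have hsum : (0 : MonoidAlgebra K H)
          = ∑ i ∈ Finset.range (2 ^ n), r.coeff i • (of K H c) ^ i := by
        rw [← hφr, hφdef, aeval_eq_sum_range' hnatdeg]
      have hcoeff : ∀ j < 2 ^ n, r.coeff j = 0 := by
        intro j hj
        have happ := congrArg (fun l : MonoidAlgebra K H => l.coeff (c ^ j)) hsum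
        beta_reduce at happ
        rw [MonoidAlgebra.coeff_sum, Finsupp.finset_sum_apply] at happ
        have : ∑ i ∈ Finset.range (2 ^ n),
            (r.coeff i • (of K H c) ^ i).coeff (c ^ j) = r.coeff j := by
          rw [Finset.sum_eq_single j]
          · rw [← map_pow (of K H), MonoidAlgebra.of_apply, MonoidAlgebra.smul_single,
              MonoidAlgebra.coeff_single, Finsupp.single_apply, if_pos rfl, smul_eq_mul, mul_one]
          · intro i hi hij
            rw [← map_pow (of K H), MonoidAlgebra.of_apply, MonoidAlgebra.smul_single,
              MonoidAlgebra.coeff_single, Finsupp.single_apply,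
              if_neg (fun hcc => hij (pow_injOn_Iio_orderOf
                (by rw [hc]; exact Finset.mem_range.mp hi) (by rw [hc]; exact hj) hcc))]
          · intro hj'
            exact absurd (Finset.mem_range.mpr hj) hj'
        rw [this] at happ
        exact happ.symm
      apply hne
      ext j
      rcases lt_or_ge j (2 ^ n) with h | h
      · simp [hcoeff j h]
      · simp [coeff_eq_zero_of_natDegree_lt (lt_of_lt_of_le hnatdeg h)]
    have : ((X : K[X]) ^ 2 ^ n - C 1) ∣ P := (modByMonic_eq_zero_iff_dvd hM).mp hr0
    rwa [hC1] at this
  -- translate the hypothesis to polynomials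
  obtain ⟨V, hV⟩ := hsurj v
  obtain ⟨W, hW⟩ := hsurj w
  have hkey : φ (V ^ 2 - V * W * (1 + X ^ 2 ^ (n - 1))) = 0 := by
    rw [map_sub, map_pow, map_mul, map_mul, map_add, map_one, hφX, hV, hW, ← hw, sub_self]
  obtain ⟨Q, hQ⟩ := hker _ hkey
  -- char 2 polynomial identities
  haveI : CharP K[X] 2 := Polynomial.instCharP 2
  set p : K[X] := X - C 1 with hpdef
  have hp2n : p ^ 2 ^ n = (X : K[X]) ^ 2 ^ n - 1 := by
    rw [hpdef, sub_pow_char_pow, C_1, one_pow]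
  have hpm : (1 : K[X]) + X ^ 2 ^ (n - 1) = p ^ 2 ^ (n - 1) := by
    rw [hpdef, sub_pow_char_pow, C_1, one_pow, CharTwo.sub_eq_add, add_comm]
  have hmm : 2 ^ (n - 1) + 2 ^ (n - 1) = 2 ^ n := by
    have : n - 1 + 1 = n := Nat.sub_add_cancel hn
    calc 2 ^ (n - 1) + 2 ^ (n - 1) = 2 ^ (n - 1) * 2 := by ring
      _ = 2 ^ (n - 1 + 1) := by rw [pow_succ]
      _ = 2 ^ n := by rw [this]
  -- main argument: (X^(2^n) - 1) ∣ V^2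
  have hVeq : V ^ 2 = V * W * p ^ 2 ^ (n - 1) + p ^ 2 ^ n * Q := by
    rw [← hpm, hp2n]
    have := sub_eq_iff_eq_add.mp hQ
    rw [this]; ring
  have hdvd : ((X : K[X]) ^ 2 ^ n - 1) ∣ V ^ 2 := by
    rcases eq_or_ne V 0 with h0 | h0
    · exact ⟨0, by rw [h0]; ring⟩
    have hV2ne : V ^ 2 ≠ 0 := pow_ne_zero 2 h0
    set a := rootMultiplicity 1 V with hadef
    have hpa : p ^ a ∣ V := pow_rootMultiplicity_dvd V 1
    have hmin : p ^ min (a + 2 ^ (n - 1)) (2 ^ n) ∣ V ^ 2 := by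
      rw [hVeq]
      apply dvd_add
      · exact dvd_trans (pow_dvd_pow p (min_le_left _ _))
          (by rw [pow_add]; exact mul_dvd_mul (Dvd.dvd.mul_right hpa W) dvd_rfl)
      · exact dvd_trans (pow_dvd_pow p (min_le_right _ _)) (Dvd.dvd.mul_right dvd_rfl Q)
    have hle : min (a + 2 ^ (n - 1)) (2 ^ n) ≤ rootMultiplicity 1 (V ^ 2) :=
      (le_rootMultiplicity_iff hV2ne).mpr hmin
    have hrm2 : rootMultiplicity 1 (V ^ 2) = a + a := by
      rw [sq, rootMultiplicity_mul (by rw [← sq]; exact hV2ne)]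
    rw [hrm2] at hle
    have hNle : 2 ^ n ≤ a + a := by
      rcases le_total (2 ^ n) (a + 2 ^ (n - 1)) with h | h
      · rwa [min_eq_right h] at hle
      · rw [min_eq_left h] at hle
        have : 2 ^ (n - 1) ≤ a := by omega
        omega
    have : p ^ 2 ^ n ∣ V ^ 2 := by
      calc p ^ 2 ^ n ∣ p ^ (a + a) := pow_dvd_pow p hNle
        _ ∣ V ^ 2 := by rw [pow_add, sq]; exact mul_dvd_mul hpa hpa
    rwa [hp2n] at this
  obtain ⟨S, hS⟩ := hdvd
  have : v ^ 2 = φ (V ^ 2) := by rw [map_pow, hV]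
  rw [this, hS, map_mul, hMφ, zero_mul]
end
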